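/- arXiv:2312.01287 — 2 statements merged into one kernel-verified Lean document; each statement's English description precedes it below -/
import Mathlib

section
/- Let ξ ∈ ℂ^p and η ∈ ℂ^q with η*η < ξ*ξ, γ = ξ*ξ - η*η. Set A = I_p - ξξ*/γ, B = -ξη*/γ, D = -I_q - ηη*/γ. Then A - B D^{-1} B* = I_p - ξξ*/(ξ*ξ). -/
/-!
With `s = η*η` and `t = ξ*ξ`, the matrix `N = ηη*` satisfies `N² = s N`, so
`D = -(I + N/γ)` is inverted by the Sherman–Morrison formula: `D⁻¹ = -(I - N/t)`, using
`1 + s/γ = t/γ`. Every product in `B D⁻¹ B*` then collapses to a scalar multiple of `ξξ*`, and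
the resulting coefficient of `ξξ*` is `1/γ - s(t - s)/(γ² t) = 1/t`.
-/

open Matrix ComplexOrder

namespace Matrix

theorem mul_mul_mul_eq_smul_of_unique {α ι k m n : Type*} [CommSemiring α] [Unique ι]
    [Fintype ι] [Fintype k] (u : Matrix m ι α) (v : Matrix ι k α) (w : Matrix k ι α)
    (x : Matrix ι n α) : u * (v * (w * x)) = (v * w) default default • (u * x) := by
  have hvw : v * w = (v * w) default default • (1 : Matrix ι ι α) := by
    ext i j
    rw [Subsingleton.elim i default, Subsingleton.elim j default]
    simp
  conv_lhs => rw [← Matrix.mul_assoc v, hvw]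
  rw [Matrix.smul_mul, Matrix.one_mul, Matrix.mul_smul]

theorem one_add_smul_mul_one_sub_smul {K n : Type*} [Field K] [Fintype n] [DecidableEq n]
    {N : Matrix n n K} {s a : K} (hN : N * N = s • N) (ha : 1 + a * s ≠ 0) :
    (1 + a • N) * (1 - (a / (1 + a * s)) • N) = 1 := by
  have hcoef : a - a / (1 + a * s) - a * (a / (1 + a * s)) * s = 0 := by
    field_simp; ring
  calc (1 + a • N) * (1 - (a / (1 + a * s)) • N)
      = 1 + (a - a / (1 + a * s) - a * (a / (1 + a * s)) * s) • N := by
        simp only [add_mul, mul_sub, one_mul, mul_one, Matrix.smul_mul, Matrix.mul_smul, hN,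
          smul_smul]
        module
    _ = 1 := by rw [hcoef, zero_smul, add_zero]

end Matrix

theorem stmt5 {p q : ℕ} (ξ : Matrix (Fin p) (Fin 1) ℂ) (η : Matrix (Fin q) (Fin 1) ℂ)
    (h : (ηᴴ * η) 0 0 < (ξᴴ * ξ) 0 0)
    (γ : ℂ) (hγ : γ = (ξᴴ * ξ) 0 0 - (ηᴴ * η) 0 0)
    (A : Matrix (Fin p) (Fin p) ℂ) (hA : A = 1 - γ⁻¹ • (ξ * ξᴴ))
    (B : Matrix (Fin p) (Fin q) ℂ) (hB : B = -(γ⁻¹ • (ξ * ηᴴ)))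
    (D : Matrix (Fin q) (Fin q) ℂ) (hD : D = -1 - γ⁻¹ • (η * ηᴴ)) :
    A - B * D⁻¹ * Bᴴ = 1 - ((ξᴴ * ξ) 0 0)⁻¹ • (ξ * ξᴴ) := by
  set s := (ηᴴ * η) 0 0
  set t := (ξᴴ * ξ) 0 0
  have hs : 0 ≤ s := (posSemidef_conjTranspose_mul_self η).diag_nonneg
  have ht : t ≠ 0 := (hs.trans_lt h).ne'
  have hγ0 : γ ≠ 0 := hγ ▸ sub_ne_zero.mpr h.ne'
  have hγ_real : star γ = γ := hγ ▸ ((hs.trans h.le).isSelfAdjoint.sub hs.isSelfAdjoint).star_eq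
  have hDinv : D⁻¹ = -(1 - t⁻¹ • (η * ηᴴ)) := by
    have hN : η * ηᴴ * (η * ηᴴ) = s • (η * ηᴴ) := by
      rw [Matrix.mul_assoc]; exact mul_mul_mul_eq_smul_of_unique _ _ _ _
    have hunit : 1 + γ⁻¹ * s = γ⁻¹ * t := by
      rw [hγ] at hγ0 ⊢; field_simp; ring
    have hcoef : γ⁻¹ / (1 + γ⁻¹ * s) = t⁻¹ := by
      rw [hunit]; field_simp
    refine inv_eq_right_inv ?_
    rw [hD, ← hcoef, sub_eq_add_neg, ← neg_add, neg_mul_neg]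
    exact one_add_smul_mul_one_sub_smul hN (hunit ▸ mul_ne_zero (inv_ne_zero hγ0) ht)
  have hBH : Bᴴ = -(γ⁻¹ • (η * ξᴴ)) := by
    simp [hB, conjTranspose_smul, conjTranspose_mul, star_inv₀, hγ_real]
  have hcoef : t⁻¹ = γ⁻¹ - γ⁻¹ * (γ⁻¹ * s - t⁻¹ * (γ⁻¹ * s * s)) := by
    rw [hγ] at hγ0 ⊢; field_simp
  rw [hA, hBH, hB, hDinv]
  simp only [Matrix.mul_neg, Matrix.neg_mul, Matrix.sub_mul, Matrix.mul_sub, Matrix.smul_mul,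
    Matrix.mul_smul, Matrix.mul_one, Matrix.mul_assoc, mul_mul_mul_eq_smul_of_unique, smul_smul,
    Fin.default_eq_zero]
  linear_combination (norm := module) hcoef • (ξ * ξᴴ : Matrix (Fin p) (Fin p) ℂ)
end

section
/- Let ξ ∈ ℂ^p, η ∈ ℂ^q with η*η < ξ*ξ, γ = ξ*ξ - η*η, c = (ξ; η) ∈ ℂ^{p+q}, J_{p,q} = diag(I_p, -I_q). Let U = [U1 U2; U3 U4] be a p×p unitary with last column ξ/√(ξ*ξ), V the first p-1 columns. Define the (p+q)×(p-1+q) matrix α = [V, (ξη*/γ)(I_q + ηη*/γ)^{-1/2}; 0, (I_q + ηη*/γ)^{1/2}]. Then J_{p,q} - cc*/γ = α J_{p-1,q} α*, where J_{p-1,q} = diag(I_{p-1}, -I_q). -/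
/-!
Put `S = (I + ηη*/γ)^{1/2}` and `B = (ξη*/γ) S⁻¹`. Expanding `α J_{p-1,q} α*` blockwise, the
identity reduces to `VV* - BB* = I - ξξ*/γ`, `BS* = ξη*/γ` and `SS* = I + ηη*/γ`; the last
two hold because `S` is a Hermitian square root. Splitting `UU* = I` into the first columns
and the last one gives `VV* = I - ξξ*/ξ*ξ`. Since `η` is an eigenvector of `S²` with
eigenvalue `(γ + η*η)/γ`, `BB* = (1/γ - 1/(γ + η*η)) ξξ*`, and `γ + η*η = ξ*ξ`.
-/

open Matrix ComplexOrder

/-- The positive semidefinite square root of a positive semidefinite matrix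
(the definition `Matrix.PosSemidef.sqrt` of the older Mathlib, since removed). -/
noncomputable def Matrix.PosSemidef.sqrt {n : Type*} [Fintype n] [DecidableEq n] {A : Matrix n n ℂ}
    (hA : A.PosSemidef) : Matrix n n ℂ :=
  hA.1.eigenvectorUnitary.1 * diagonal ((↑) ∘ (√·) ∘ hA.1.eigenvalues) *
    (star hA.1.eigenvectorUnitary : Matrix n n ℂ)

namespace Matrix

section Sqrt

variable {n : Type*} [Fintype n] [DecidableEq n] {A : Matrix n n ℂ}

theorem PosSemidef.sqrt_conjTranspose (hA : A.PosSemidef) : hA.sqrtᴴ = hA.sqrt := by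
  rw [PosSemidef.sqrt, conjTranspose_mul, conjTranspose_mul, diagonal_conjTranspose,
    ← star_eq_conjTranspose, ← star_eq_conjTranspose, star_star, Matrix.mul_assoc]
  congr 3
  ext i
  simp

theorem PosSemidef.sqrt_mul_sqrt (hA : A.PosSemidef) : hA.sqrt * hA.sqrt = A := by
  have hU := hA.1.eigenvectorUnitary.2
  rw [Matrix.mem_unitaryGroup_iff'] at hU
  conv_rhs => rw [hA.1.spectral_theorem, Unitary.conjStarAlgAut_apply]
  simp only [PosSemidef.sqrt, Matrix.mul_assoc]
  rw [← Matrix.mul_assoc (star _) _ (diagonal _ * _), hU, Matrix.one_mul,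
    ← Matrix.mul_assoc (diagonal _), diagonal_mul_diagonal]
  congr 3
  ext i
  simp [← Complex.ofReal_mul, Real.mul_self_sqrt (hA.eigenvalues_nonneg i)]

theorem PosSemidef.isUnit_det_sqrt (hA : A.PosSemidef) (hdet : IsUnit A.det) :
    IsUnit hA.sqrt.det :=
  isUnit_of_mul_isUnit_left (by rwa [← det_mul, hA.sqrt_mul_sqrt])

end Sqrt

theorem isUnit_det_one_add_smul_mul_conjTranspose {m n : Type*} [Fintype m] [Fintype n]
    [DecidableEq n] {r : ℂ} (hr : 0 ≤ r) (x : Matrix n m ℂ) :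
    IsUnit (1 + r • (x * xᴴ)).det :=
  (isUnit_iff_isUnit_det _).mp
    (PosDef.one.add_posSemidef ((posSemidef_self_mul_conjTranspose x).smul hr)).isUnit

theorem inv_mul_eq_inv_smul_of_mul_eq_smul {m n K : Type*} [Fintype n] [DecidableEq n] [Field K]
    {M : Matrix n n K} (hM : IsUnit M.det) {x : Matrix n m K} {a : K} (h : M * x = a • x) :
    M⁻¹ * x = a⁻¹ • x := by
  have hx : x = M⁻¹ * (a • x) := by
    rw [← h, ← Matrix.mul_assoc, nonsing_inv_mul _ hM, Matrix.one_mul]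
  rcases eq_or_ne a 0 with rfl | ha
  · rw [zero_smul, Matrix.mul_zero] at hx
    simp [hx]
  · rw [Matrix.mul_smul] at hx
    rw [hx, smul_smul, inv_mul_cancel₀ ha, one_smul, ← hx]

theorem mul_eq_smul_of_fin_one {m R : Type*} [CommSemiring R] (x : Matrix m (Fin 1) R)
    (y : Matrix (Fin 1) (Fin 1) R) : x * y = y 0 0 • x := by
  ext i j
  rw [Subsingleton.elim j 0]
  simp [mul_apply, mul_comm]

theorem mul_conjTranspose_castSucc_add_last {m R : Type*} [NonUnitalNonAssocSemiring R] [Star R]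
    {n : ℕ} {U : Matrix m (Fin (n + 1)) R} {V : Matrix m (Fin n) R}
    (hV : ∀ i j, V i j = U i j.castSucc) {u : Matrix m (Fin 1) R}
    (hu : ∀ i, U i (Fin.last n) = u i 0) :
    V * Vᴴ + u * uᴴ = U * Uᴴ := by
  ext i k
  simp [mul_apply, Fin.sum_univ_castSucc, hV, hu]

theorem fromBlocks_mul_signature_mul_conjTranspose {m n l k R : Type*} [Fintype n] [Fintype k]
    [DecidableEq n] [DecidableEq k] [Ring R] [StarRing R] (A : Matrix m n R) (B : Matrix m k R)
    (D : Matrix l k R) :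
    fromBlocks A B 0 D * (fromBlocks 1 0 0 (-1) : Matrix (n ⊕ k) (n ⊕ k) R) *
        (fromBlocks A B 0 D)ᴴ
      = fromBlocks (A * Aᴴ - B * Bᴴ) (-(B * Dᴴ)) (-(D * Bᴴ)) (-(D * Dᴴ)) := by
  rw [fromBlocks_conjTranspose, fromBlocks_multiply, fromBlocks_multiply]
  simp [sub_eq_add_neg]

section Complex

variable {m n : Type*} [Fintype m]

theorem conjTranspose_mul_self_apply_re_nonneg [Fintype n] (x : Matrix m n ℂ) (i : n) :
    0 ≤ ((xᴴ * x) i i).re :=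
  (Complex.nonneg_iff.mp (posSemidef_conjTranspose_mul_self x).diag_nonneg).1

theorem ofReal_re_conjTranspose_mul_self_apply [Fintype n] (x : Matrix m n ℂ) (i : n) :
    (((xᴴ * x) i i).re : ℂ) = (xᴴ * x) i i :=
  (Complex.eq_re_of_ofReal_le (r := 0) (by exact_mod_cast
    (posSemidef_conjTranspose_mul_self x).diag_nonneg)).symm

theorem inv_sqrt_smul_mul_conjTranspose {r : ℝ} (hr : 0 ≤ r) (x : Matrix n m ℂ) :
    ((√r : ℂ)⁻¹ • x) * ((√r : ℂ)⁻¹ • x)ᴴ = (r : ℂ)⁻¹ • (x * xᴴ) := by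
  rw [conjTranspose_smul, Matrix.smul_mul, Matrix.mul_smul, smul_smul, Complex.star_def,
    map_inv₀, Complex.conj_ofReal, ← mul_inv, ← Complex.ofReal_mul, Real.mul_self_sqrt hr]

end Complex

theorem mul_conjTranspose_eq_one_sub_of_last_col {n : ℕ}
    {U : Matrix (Fin (n + 1)) (Fin (n + 1)) ℂ} (hU : Uᴴ * U = 1)
    {ξ : Matrix (Fin (n + 1)) (Fin 1) ℂ}
    (hlast : ∀ i, U i (Fin.last n) = ξ i 0 / (√((ξᴴ * ξ) 0 0).re : ℂ))
    {V : Matrix (Fin (n + 1)) (Fin n) ℂ} (hV : ∀ i j, V i j = U i j.castSucc) :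
    V * Vᴴ = 1 - ((ξᴴ * ξ) 0 0)⁻¹ • (ξ * ξᴴ) := by
  have hsplit := mul_conjTranspose_castSucc_add_last hV
    (u := (√((ξᴴ * ξ) 0 0).re : ℂ)⁻¹ • ξ) fun i => by simp [hlast, div_eq_inv_mul]
  rw [inv_sqrt_smul_mul_conjTranspose (conjTranspose_mul_self_apply_re_nonneg ξ 0),
    ofReal_re_conjTranspose_mul_self_apply, mul_eq_one_comm.mp hU] at hsplit
  exact eq_sub_of_add_eq hsplit

theorem mul_inv_sqrt_mul_conjTranspose {m q : Type*} [Fintype q] [DecidableEq q]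
    (ξ : Matrix m (Fin 1) ℂ) (η : Matrix q (Fin 1) ℂ) {γ : ℝ} (hγ : 0 < γ)
    (hM : (1 + (γ : ℂ)⁻¹ • (η * ηᴴ)).PosSemidef) :
    (γ : ℂ)⁻¹ • (ξ * ηᴴ) * hM.sqrt⁻¹ * ((γ : ℂ)⁻¹ • (ξ * ηᴴ) * hM.sqrt⁻¹)ᴴ
      = ((γ : ℂ)⁻¹ - (γ + (ηᴴ * η) 0 0)⁻¹) • (ξ * ξᴴ) := by
  set M := 1 + (γ : ℂ)⁻¹ • (η * ηᴴ)
  have hγ' : (0 : ℂ) < γ := by exact_mod_cast hγ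
  have hMdet : IsUnit M.det := isUnit_det_one_add_smul_mul_conjTranspose (inv_nonneg.mpr hγ'.le) η
  have hSinv : hM.sqrt⁻¹ * hM.sqrt⁻¹ᴴ = M⁻¹ := by
    rw [conjTranspose_nonsing_inv, hM.sqrt_conjTranspose, ← Matrix.mul_inv_rev,
      hM.sqrt_mul_sqrt]
  have hMη : M * η = (1 + (γ : ℂ)⁻¹ * (ηᴴ * η) 0 0) • η := by
    rw [add_smul, one_smul, ← smul_smul, Matrix.add_mul, Matrix.one_mul, Matrix.smul_mul,
      Matrix.mul_assoc, mul_eq_smul_of_fin_one]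
  have hγt : (γ : ℂ) + (ηᴴ * η) 0 0 ≠ 0 :=
    (add_pos_of_pos_of_nonneg hγ' (posSemidef_conjTranspose_mul_self η).diag_nonneg).ne'
  calc (γ : ℂ)⁻¹ • (ξ * ηᴴ) * hM.sqrt⁻¹ * ((γ : ℂ)⁻¹ • (ξ * ηᴴ) * hM.sqrt⁻¹)ᴴ
      = ((γ : ℂ)⁻¹ * (γ : ℂ)⁻¹) • (ξ * (ηᴴ * (M⁻¹ * η)) * ξᴴ) := by
        simp only [conjTranspose_mul, conjTranspose_smul, conjTranspose_conjTranspose,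
          Complex.star_def, map_inv₀, Complex.conj_ofReal, Matrix.smul_mul, Matrix.mul_smul,
          smul_smul, Matrix.mul_assoc]
        rw [← Matrix.mul_assoc hM.sqrt⁻¹, hSinv]
    _ = ((γ : ℂ)⁻¹ * (γ : ℂ)⁻¹ * (1 + (γ : ℂ)⁻¹ * (ηᴴ * η) 0 0)⁻¹ * (ηᴴ * η) 0 0)
          • (ξ * ξᴴ) := by
        rw [inv_mul_eq_inv_smul_of_mul_eq_smul hMdet hMη, Matrix.mul_smul, Matrix.mul_smul,
          Matrix.smul_mul, mul_eq_smul_of_fin_one ξ (ηᴴ * η), Matrix.smul_mul, smul_smul,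
          smul_smul]
    _ = ((γ : ℂ)⁻¹ - (γ + (ηᴴ * η) 0 0)⁻¹) • (ξ * ξᴴ) := by
        congr 1
        field_simp
        ring

end Matrix

theorem stmt7 {n q : ℕ} (ξ : Matrix (Fin (n + 1)) (Fin 1) ℂ) (η : Matrix (Fin q) (Fin 1) ℂ)
    (γ : ℝ) (hγpos : 0 < γ) (hγ : (γ : ℂ) = (ξᴴ * ξ) 0 0 - (ηᴴ * η) 0 0)
    (U : Matrix (Fin (n + 1)) (Fin (n + 1)) ℂ) (hU : Uᴴ * U = 1)
    (hlast : ∀ i, U i (Fin.last n) = ξ i 0 / (Real.sqrt (((ξᴴ * ξ) 0 0).re) : ℂ))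
    (V : Matrix (Fin (n + 1)) (Fin n) ℂ) (hV : ∀ i j, V i j = U i j.castSucc)
    (M : Matrix (Fin q) (Fin q) ℂ) (hMdef : M = 1 + (γ : ℂ)⁻¹ • (η * ηᴴ))
    (hM : M.PosSemidef)
    (α : Matrix (Fin (n + 1) ⊕ Fin q) (Fin n ⊕ Fin q) ℂ)
    (hα : α = fromBlocks V ((γ : ℂ)⁻¹ • (ξ * ηᴴ) * (hM.sqrt)⁻¹) 0 hM.sqrt)
    (c : Matrix (Fin (n + 1) ⊕ Fin q) (Fin 1) ℂ)
    (hc : c = Matrix.of fun i (_ : Fin 1) => Sum.elim (fun i => ξ i 0) (fun j => η j 0) i) :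
    fromBlocks (1 : Matrix (Fin (n + 1)) (Fin (n + 1)) ℂ) 0 0 (-(1 : Matrix (Fin q) (Fin q) ℂ))
        - (γ : ℂ)⁻¹ • (c * cᴴ)
      = α * fromBlocks (1 : Matrix (Fin n) (Fin n) ℂ) 0 0 (-(1 : Matrix (Fin q) (Fin q) ℂ)) * αᴴ := by
  subst hα hMdef
  have hc' : c = fromRows ξ η := by
    subst hc
    ext (i | i) j <;> simp [Subsingleton.elim j 0]
  have hSdet : IsUnit hM.sqrt.det := hM.isUnit_det_sqrt <|
    isUnit_det_one_add_smul_mul_conjTranspose (inv_nonneg.mpr (by exact_mod_cast hγpos.le)) η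
  have hBS : (γ : ℂ)⁻¹ • (ξ * ηᴴ) * hM.sqrt⁻¹ * hM.sqrtᴴ = (γ : ℂ)⁻¹ • (ξ * ηᴴ) := by
    rw [hM.sqrt_conjTranspose, Matrix.mul_assoc, nonsing_inv_mul _ hSdet, Matrix.mul_one]
  rw [fromBlocks_mul_signature_mul_conjTranspose, hc',
    conjTranspose_fromRows_eq_fromCols_conjTranspose, fromRows_mul_fromCols, fromBlocks_smul,
    sub_eq_add_neg, fromBlocks_neg, fromBlocks_add, fromBlocks_inj]
  refine ⟨?_, ?_, ?_, ?_⟩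
  · rw [mul_conjTranspose_eq_one_sub_of_last_col hU hlast hV,
      mul_inv_sqrt_mul_conjTranspose ξ η hγpos, sub_eq_iff_eq_add.mp hγ.symm, sub_smul]
    abel
  · rw [hBS, zero_add]
  · rw [← conjTranspose_conjTranspose (hM.sqrt * _), conjTranspose_mul,
      conjTranspose_conjTranspose, hBS]
    simp
  · rw [hM.sqrt_conjTranspose, hM.sqrt_mul_sqrt, neg_add]
end
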